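/- For v \in \Delta^{re,+} let O(v) denote the sum of the distinct elements of the \sigma-orbit of v (so O(v) = v if \sigma(v) = v, and O(v) = v + \sigma(v) + \sigma^2(v) if the orbit of v has three elements). Define \underline{\Delta}_0^+ = \{O(\beta) : \beta \in \Delta_0'^+\} and \underline{\Delta}^{re,+} = \{x + m\delta : x \in \underline{\Delta}_0^+, m \in \mathbb{Z}_{\ge 0}\} \cup \{m\delta - x : x \in \underline{\Delta}_0^+, m \in \mathbb{Z}_{\ge 1}\}. Then: (i) for every v \in \Delta^{re,+}, either O(v) \in \mathbb{Z}_{>0}\cdot\delta or O(v) \in \underline{\Delta}^{re,+}; (ii) the assignment \omega \mapsto \sum_{u \in \omega} u defines a bijection from the set of \sigma-orbits \omega on \Delta^{re,+} whose element-sum does not lie in \mathbb{Z}\cdot\delta onto \underline{\Delta}^{re,+} (the positive real root system of affine type G_2^{(1)}). -/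

import Mathlib

/-!
Statement 12: For the affine root system of type `E_6^{(1)}` with the admissible
order-3 diagram automorphism `σ` (`α_0 → α_5 → α_1 → α_0`, `α_6 → α_4 → α_2 → α_6`,
`α_3 → α_3`), let `O(v)` be the sum of the distinct elements of the `σ`-orbit of
`v` (`O(v) = v` if `σ(v) = v`, and `O(v) = v + σ(v) + σ²(v)` if the orbit has three
elements), `ulΔ₀⁺ = O(Δ₀'⁺)`, and
`ulΔ^{re,+} = {x + mδ : x ∈ ulΔ₀⁺, m ≥ 0} ∪ {mδ - x : x ∈ ulΔ₀⁺, m ≥ 1}`.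
Then (i) for every positive real root `v`, either `O(v) ∈ ℤ_{>0}·δ` or
`O(v) ∈ ulΔ^{re,+}`; (ii) `ω ↦ ∑_{u ∈ ω} u` is a bijection from the set of
`σ`-orbits on `Δ^{re,+}` whose element-sum is not in `ℤ·δ` onto `ulΔ^{re,+}`
(the positive real roots of type `G_2^{(1)}`).
-/

namespace Stmt12

/-- The root lattice `Q = ⨁_{i ∈ I} ℤ α_i` for `I = {0,1,…,6}`. -/
abbrev Q := Fin 7 → ℤ

/-- The edges of the Dynkin diagram of affine type `E_6^{(1)}`. -/
abbrev epair (i j : ℕ) : Prop :=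
  (i = 1 ∧ j = 2) ∨ (i = 2 ∧ j = 3) ∨ (i = 3 ∧ j = 4) ∨ (i = 4 ∧ j = 5) ∨
  (i = 3 ∧ j = 6) ∨ (i = 0 ∧ j = 6)

abbrev edge (i j : ℕ) : Prop := epair i j ∨ epair j i

/-- The generalized Cartan matrix of type `E_6^{(1)}`. -/
def CM (i j : Fin 7) : ℤ :=
  if i = j then 2 else if edge (i : ℕ) (j : ℕ) then -1 else 0

/-- The symmetric bilinear form `B` on `Q` determined by the Cartan matrix. -/
def B (v w : Q) : ℤ := ∑ i, ∑ j, v i * CM i j * w j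

/-- The set of positive real roots. -/
def ΔrePos : Set Q := {v | (∀ i, 0 ≤ v i) ∧ B v v = 2}

/-- The primitive null root `δ`. -/
def δ : Q := ![1, 1, 2, 3, 2, 1, 2]

/-- The admissible order-3 diagram automorphism `σ` (on coordinates,
`(σ v)_j = v_{p⁻¹(j)}`). -/
def σmap (v : Q) : Q := fun j => v (![1, 5, 4, 3, 6, 0, 2] j)

/-- The `σ`-stable subsystem `Δ₀'` of type `D_4` supported on `{2,3,4,6}`. -/
def Δ0' : Set Q := {v | B v v = 2 ∧ v 0 = 0 ∧ v 1 = 0 ∧ v 5 = 0}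

/-- The positive part `Δ₀'⁺ = Δ₀' ∩ ℕ^I`. -/
def Δ0'Pos : Set Q := {v | v ∈ Δ0' ∧ ∀ i, 0 ≤ v i}

/-- `O(v)`: the sum of the distinct elements of the `σ`-orbit of `v`
(here `σ` has order 3, so `O(v) = v` if `σ(v) = v` and
`O(v) = v + σ(v) + σ²(v)` if the orbit has three elements). -/
noncomputable def O (v : Q) : Q :=
  if σmap v = v then v else v + σmap v + σmap (σmap v)

/-- `ulΔ₀⁺ = {O(β) : β ∈ Δ₀'⁺}` (a positive system of type `G_2`). -/
noncomputable def ulΔ0Pos : Set Q := O '' Δ0'Pos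

/-- `ulΔ^{re,+}`, the positive real roots of affine type `G_2^{(1)}`. -/
noncomputable def ulΔrePos : Set Q :=
  {y | ∃ x ∈ ulΔ0Pos, ∃ m : ℕ, y = x + (m : ℤ) • δ} ∪
  {y | ∃ x ∈ ulΔ0Pos, ∃ m : ℕ, 1 ≤ m ∧ y = (m : ℤ) • δ - x}

/-- The `σ`-orbit of `v`. -/
def orb (v : Q) : Set Q := {w | ∃ k : ℕ, w = σmap^[k] v}

/-- The set of `σ`-orbits on `Δ^{re,+}`. -/
def Orbits : Set (Set Q) := {ω | ∃ v ∈ ΔrePos, ω = orb v}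


/-!
Write a positive real root as `v = β + v₀ δ` with `β` a root of the finite system `E₆` on
the nodes `1, …, 6`; the finitely many facts needed about the 72 roots of `E₆` are checked
by `decide`. If `σ v = v`, then `β` is `σ`-fixed, hence supported on `{2, 3, 4, 6}`, and
`O v = v = ±β + v₀ δ` is a short root of the folded system. Otherwise
`O v = β + σβ + σ²β + 3 v₀ δ`, and modulo `δ` the orbit sum of a finite root is `0` or `±`
one of the three positive long roots of `G₂`.

Fixed and non-fixed orbits never have the same sum, since `B (O v) (O v)` is `2` in the first
case and `6 + 6 B(v, σ v)` in the second. Two non-fixed orbits whose sums agree and do not lie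
in `ℤδ` coincide, because a finite root is determined up to `σ` by its orbit sum modulo `3δ`.
Conversely, each long root plus `0`, `δ` or `2δ` is the orbit sum of a finite root, and
shifting `v` by `δ` shifts `O v` by `3δ`, so every real root of the folded system is attained.
-/

/-! ### The form `B`, the automorphism `σ` and the null root `δ` -/

lemma CM_eq : CM = fun i j => ![![2, 0, 0, 0, 0, 0, -1], ![0, 2, -1, 0, 0, 0, 0],
    ![0, -1, 2, -1, 0, 0, 0], ![0, 0, -1, 2, -1, 0, -1], ![0, 0, 0, -1, 2, -1, 0],
    ![0, 0, 0, 0, -1, 2, 0], ![-1, 0, 0, -1, 0, 0, 2]] i j := by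
  funext i j; fin_cases i <;> fin_cases j <;> rfl

lemma B_apply (v w : Q) : B v w =
    2 * (v 0 * w 0 + v 1 * w 1 + v 2 * w 2 + v 3 * w 3 + v 4 * w 4 + v 5 * w 5 + v 6 * w 6)
    - (v 1 * w 2 + v 2 * w 1 + v 2 * w 3 + v 3 * w 2 + v 3 * w 4 + v 4 * w 3 + v 4 * w 5
      + v 5 * w 4 + v 3 * w 6 + v 6 * w 3 + v 0 * w 6 + v 6 * w 0) := by
  simp only [B, CM_eq, Fin.sum_univ_seven, Matrix.cons_val]
  ring

lemma B_add_smul_δ (v w : Q) (c d : ℤ) : B (v + c • δ) (w + d • δ) = B v w := by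
  simp only [B_apply, δ, Pi.add_apply, Pi.smul_apply, Matrix.cons_val, smul_eq_mul]
  ring

lemma B_smul_δ_sub (v : Q) (c : ℤ) : B (c • δ - v) (c • δ - v) = B v v := by
  simp only [B_apply, δ, Pi.sub_apply, Pi.smul_apply, Matrix.cons_val, smul_eq_mul]
  ring

lemma ne_zero_of_mem_ΔrePos {v : Q} (hv : v ∈ ΔrePos) : v ≠ 0 := by
  rintro rfl
  simp [ΔrePos, B] at hv

lemma σmap_add (u w : Q) : σmap (u + w) = σmap u + σmap w := rfl

lemma σmap_neg (u : Q) : σmap (-u) = -σmap u := rfl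

lemma σmap_sub (u w : Q) : σmap (u - w) = σmap u - σmap w := rfl

lemma σmap_smul (c : ℤ) (u : Q) : σmap (c • u) = c • σmap u := rfl

lemma σmap_δ : σmap δ = δ := by decide

lemma σmap_σmap_σmap (u : Q) : σmap (σmap (σmap u)) = u := by
  funext j; fin_cases j <;> rfl

lemma σmap_injective : Function.Injective σmap := fun u w h => by
  simpa only [σmap_σmap_σmap] using congrArg (fun x => σmap (σmap x)) h

lemma σmap_add_smul_δ (u : Q) (c : ℤ) : σmap (u + c • δ) = σmap u + c • δ := by
  rw [σmap_add, σmap_smul, σmap_δ]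

lemma σmap_add_smul_δ_eq_iff {u : Q} {c : ℤ} :
    σmap (u + c • δ) = u + c • δ ↔ σmap u = u := by
  rw [σmap_add_smul_δ, add_left_inj]

lemma σmap_smul_δ_sub_eq_iff {u : Q} {c : ℤ} :
    σmap (c • δ - u) = c • δ - u ↔ σmap u = u := by
  rw [σmap_sub, σmap_smul, σmap_δ, sub_right_inj]

lemma σmap_iterate_add_smul_δ (j : ℕ) (u : Q) (c : ℤ) :
    σmap^[j] (u + c • δ) = σmap^[j] u + c • δ := by
  induction j with
  | zero => rfl
  | succ j ih =>
    rw [Function.iterate_succ_apply', Function.iterate_succ_apply', ih, σmap_add_smul_δ]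

lemma σmap_iterate_ne {v : Q} (hv : σmap v ≠ v) (j : ℕ) : σmap (σmap^[j] v) ≠ σmap^[j] v := by
  rw [← Function.iterate_succ_apply' σmap, Function.iterate_succ_apply]
  exact fun h => hv ((σmap_injective.iterate j) h)

def finPart (v : Q) : Q := v - v 0 • δ

lemma finPart_eq_add (v : Q) : finPart v = v + (-v 0) • δ := by
  rw [finPart, neg_smul, sub_eq_add_neg]

lemma finPart_apply_zero (v : Q) : finPart v 0 = 0 := by
  simp [finPart, δ]

lemma finPart_of_apply_zero {v : Q} (h : v 0 = 0) : finPart v = v := by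
  rw [finPart, h, zero_smul, sub_zero]

lemma finPart_add_smul_δ_self (v : Q) : finPart v + v 0 • δ = v := sub_add_cancel _ _

lemma finPart_add_smul_δ (v : Q) (c : ℤ) : finPart (v + c • δ) = finPart v := by
  simp only [finPart, Pi.add_apply, Pi.smul_apply, smul_eq_mul, δ, Matrix.cons_val, add_smul]
  module

lemma finPart_eq_zero_iff {v : Q} : finPart v = 0 ↔ ∃ m : ℤ, v = m • δ := by
  constructor
  · exact fun h => ⟨v 0, sub_eq_zero.mp h⟩
  · rintro ⟨m, rfl⟩
    rw [← zero_add (m • δ), finPart_add_smul_δ]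
    simp [finPart]

lemma B_finPart (v : Q) : B (finPart v) (finPart v) = B v v := by
  rw [finPart_eq_add, B_add_smul_δ]

lemma σmap_finPart_eq_iff {v : Q} : σmap (finPart v) = finPart v ↔ σmap v = v := by
  rw [finPart_eq_add, σmap_add_smul_δ_eq_iff]

lemma finPart_σmap_iterate_finPart (j : ℕ) (v : Q) :
    finPart (σmap^[j] (finPart v)) = finPart (σmap^[j] v) := by
  rw [finPart_eq_add v, σmap_iterate_add_smul_δ, finPart_add_smul_δ]

def σsum (u : Q) : Q := u + σmap u + σmap (σmap u)

lemma σsum_apply_zero (u : Q) : σsum u 0 = u 0 + u 1 + u 5 := rfl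

lemma σsum_add_smul_δ (u : Q) (c : ℤ) : σsum (u + c • δ) = σsum u + (3 * c) • δ := by
  simp only [σsum, σmap_add_smul_δ, mul_smul]
  module

lemma σsum_smul_δ_sub (u : Q) (c : ℤ) : σsum (c • δ - u) = (3 * c) • δ - σsum u := by
  simp only [σsum, σmap_sub, σmap_smul, σmap_δ, mul_smul]
  module

lemma σsum_finPart (v : Q) : σsum (finPart v) = σsum v - (3 * v 0) • δ := by
  rw [finPart_eq_add, σsum_add_smul_δ]
  module

lemma finPart_σsum_finPart (v : Q) : finPart (σsum (finPart v)) = finPart (σsum v) := by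
  rw [σsum_finPart, sub_eq_add_neg, ← neg_smul, finPart_add_smul_δ]

lemma σsum_finPart_apply_zero (v : Q) : σsum (finPart v) 0 = σsum v 0 - 3 * v 0 := by
  simp [σsum_finPart, δ]

lemma B_σsum (u : Q) : B (σsum u) (σsum u) = 3 * B u u + 6 * B u (σmap u) := by
  simp only [B_apply, σsum, σmap, Pi.add_apply, Matrix.cons_val]
  ring

lemma O_of_fixed {v : Q} (h : σmap v = v) : O v = v := if_pos h

lemma O_of_not_fixed {v : Q} (h : σmap v ≠ v) : O v = σsum v := if_neg h

lemma O_σmap (v : Q) : O (σmap v) = O v := by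
  by_cases h : σmap v = v
  · rw [h]
  · rw [O_of_not_fixed h, O_of_not_fixed fun h' => h (σmap_injective h'), σsum, σsum,
      σmap_σmap_σmap]
    abel

lemma O_σmap_iterate (j : ℕ) (v : Q) : O (σmap^[j] v) = O v := by
  induction j with
  | zero => rfl
  | succ j ih => rw [Function.iterate_succ_apply', O_σmap, ih]

lemma le_O {v : Q} (hv : ∀ i, 0 ≤ v i) (i : Fin 7) : v i ≤ O v i := by
  unfold O
  split_ifs
  · rfl
  · have h1 : 0 ≤ σmap v i := hv _
    have h2 : 0 ≤ σmap (σmap v) i := hv _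
    simp only [Pi.add_apply]
    omega

lemma O_ne_zero {v : Q} (hv : v ∈ ΔrePos) : O v ≠ 0 := fun h =>
  ne_zero_of_mem_ΔrePos hv <| le_antisymm (fun i => by simpa [h] using le_O hv.1 i) hv.1

/-! ### Orbits -/

lemma σmap_iterate_mem (v : Q) (k : ℕ) :
    σmap^[k] v ∈ ({v, σmap v, σmap (σmap v)} : Set Q) := by
  induction k with
  | zero => exact Or.inl rfl
  | succ k ih =>
    rw [Function.iterate_succ_apply']
    simp only [Set.mem_insert_iff, Set.mem_singleton_iff] at ih ⊢
    rcases ih with h | h | h <;> simp [h, σmap_σmap_σmap]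

lemma orb_eq (v : Q) : orb v = {v, σmap v, σmap (σmap v)} := by
  ext w
  refine ⟨fun ⟨k, hk⟩ => hk ▸ σmap_iterate_mem v k, ?_⟩
  rintro (rfl | rfl | rfl)
  exacts [⟨0, rfl⟩, ⟨1, rfl⟩, ⟨2, rfl⟩]

lemma orb_σmap (v : Q) : orb (σmap v) = orb v := by
  ext w
  simp only [orb_eq, σmap_σmap_σmap, Set.mem_insert_iff, Set.mem_singleton_iff]
  tauto

lemma orb_σmap_iterate (j : ℕ) (v : Q) : orb (σmap^[j] v) = orb v := by
  induction j with
  | zero => rfl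
  | succ j ih => rw [Function.iterate_succ_apply', orb_σmap, ih]

lemma orb_eq_of_mem {v w : Q} (h : w ∈ orb v) : orb w = orb v := by
  obtain ⟨j, rfl⟩ := h
  exact orb_σmap_iterate j v

lemma finsum_mem_orb (v : Q) : ∑ᶠ u ∈ orb v, u = O v := by
  rw [orb_eq]
  by_cases h : σmap v = v
  · simp [h, O_of_fixed h]
  · have h1 : σmap (σmap v) ≠ σmap v := fun h' => h (σmap_injective h')
    have h2 : σmap (σmap v) ≠ v := fun h' =>
      h (by simpa [σmap_σmap_σmap] using (congrArg σmap h').symm)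
    rw [finsum_mem_insert _ (by simp [Ne.symm h, Ne.symm h2]) (Set.toFinite _),
      finsum_mem_pair h1.symm, O_of_not_fixed h, σsum, add_assoc]

/-! ### The finite root system `E₆` -/

/-- The positive roots of the finite root system `E₆` on the nodes `1, …, 6`. -/
def posRoots : List Q :=
  [![0, 0, 0, 0, 0, 0, 1], ![0, 0, 0, 0, 0, 1, 0], ![0, 0, 0, 0, 1, 0, 0],
  ![0, 0, 0, 0, 1, 1, 0], ![0, 0, 0, 1, 0, 0, 0], ![0, 0, 0, 1, 0, 0, 1],
  ![0, 0, 0, 1, 1, 0, 0], ![0, 0, 0, 1, 1, 0, 1], ![0, 0, 0, 1, 1, 1, 0],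
  ![0, 0, 0, 1, 1, 1, 1], ![0, 0, 1, 0, 0, 0, 0], ![0, 0, 1, 1, 0, 0, 0],
  ![0, 0, 1, 1, 0, 0, 1], ![0, 0, 1, 1, 1, 0, 0], ![0, 0, 1, 1, 1, 0, 1],
  ![0, 0, 1, 1, 1, 1, 0], ![0, 0, 1, 1, 1, 1, 1], ![0, 0, 1, 2, 1, 0, 1],
  ![0, 0, 1, 2, 1, 1, 1], ![0, 0, 1, 2, 2, 1, 1], ![0, 1, 0, 0, 0, 0, 0],
  ![0, 1, 1, 0, 0, 0, 0], ![0, 1, 1, 1, 0, 0, 0], ![0, 1, 1, 1, 0, 0, 1],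
  ![0, 1, 1, 1, 1, 0, 0], ![0, 1, 1, 1, 1, 0, 1], ![0, 1, 1, 1, 1, 1, 0],
  ![0, 1, 1, 1, 1, 1, 1], ![0, 1, 1, 2, 1, 0, 1], ![0, 1, 1, 2, 1, 1, 1],
  ![0, 1, 1, 2, 2, 1, 1], ![0, 1, 2, 2, 1, 0, 1], ![0, 1, 2, 2, 1, 1, 1],
  ![0, 1, 2, 2, 2, 1, 1], ![0, 1, 2, 3, 2, 1, 1], ![0, 1, 2, 3, 2, 1, 2]]

def finRoots : List Q := posRoots ++ posRoots.map Neg.neg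

set_option maxHeartbeats 1000000 in
lemma posRoots_spec : ∀ β ∈ posRoots,
    β 0 = 0 ∧ B β β = 2 ∧ (∀ i, 0 ≤ β i) ∧ (∀ i, β i ≤ δ i) := by
  decide

set_option maxRecDepth 40000 in
set_option maxHeartbeats 2000000 in
lemma mem_finRoots_of_bounded : ∀ a ∈ Finset.Icc (-1 : ℤ) 1, ∀ b ∈ Finset.Icc (-2 : ℤ) 2,
    ∀ c ∈ Finset.Icc (-3 : ℤ) 3, ∀ d ∈ Finset.Icc (-2 : ℤ) 2, ∀ e ∈ Finset.Icc (-1 : ℤ) 1,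
    ∀ f ∈ Finset.Icc (-2 : ℤ) 2,
    a * a + b * b + c * c + d * d + e * e + f * f - (a * b + b * c + c * d + d * e + c * f) = 1 →
    ![0, a, b, c, d, e, f] ∈ finRoots := by
  decide

set_option maxHeartbeats 1000000 in
lemma mem_finRoots {β : Q} (h0 : β 0 = 0) (hB : B β β = 2) : β ∈ finRoots := by
  have hβ : β = ![0, β 1, β 2, β 3, β 4, β 5, β 6] := by
    funext i; fin_cases i
    exacts [h0, rfl, rfl, rfl, rfl, rfl, rfl]
  rw [B_apply, h0] at hB
  set a := β 1; set b := β 2; set c := β 3; set d := β 4; set e := β 5; set f := β 6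
  have hq : a * a + b * b + c * c + d * d + e * e + f * f
      - (a * b + b * c + c * d + d * e + c * f) = 1 := by linarith
  -- completing squares gives `xᵢ² ≤ 2 (C⁻¹)ᵢᵢ` for the inverse Cartan matrix `C⁻¹` of `E₆`
  have ha : 3 * (a * a) ≤ 8 := by
    nlinarith [sq_nonneg (2*b - c - a), sq_nonneg (3*c - 2*d - 2*f - a),
      sq_nonneg (4*d - 3*e - 2*f - a), sq_nonneg (5*e - 2*f - a), sq_nonneg (4*f - 3*a)]
  have hb : 3 * (b * b) ≤ 20 := by
    nlinarith [sq_nonneg (2*a - b), sq_nonneg (2*c - d - f - b),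
      sq_nonneg (3*d - 2*e - f - b), sq_nonneg (4*e - f - b), sq_nonneg (5*f - 3*b)]
  have hc : c * c ≤ 12 := by
    nlinarith [sq_nonneg (2*a - b), sq_nonneg (3*b - 2*c), sq_nonneg (2*d - e - c),
      sq_nonneg (3*e - c), sq_nonneg (2*f - c)]
  have hd : 3 * (d * d) ≤ 20 := by
    nlinarith [sq_nonneg (2*a - b), sq_nonneg (3*b - 2*c), sq_nonneg (4*c - 3*f - 3*d),
      sq_nonneg (2*e - d), sq_nonneg (5*f - 3*d)]
  have he : 3 * (e * e) ≤ 8 := by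
    nlinarith [sq_nonneg (2*a - b), sq_nonneg (3*b - 2*c), sq_nonneg (4*c - 3*d - 3*f),
      sq_nonneg (5*d - 3*f - 4*e), sq_nonneg (4*f - 3*e)]
  have hf : f * f ≤ 4 := by
    nlinarith [sq_nonneg (2*a - b), sq_nonneg (3*b - 2*c), sq_nonneg (4*c - 3*d - 3*f),
      sq_nonneg (5*d - 4*e - 3*f), sq_nonneg (2*e - f)]
  rw [hβ]
  refine mem_finRoots_of_bounded a ?_ b ?_ c ?_ d ?_ e ?_ f ?_ hq <;>
    rw [Finset.mem_Icc] <;> constructor <;> nlinarith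

lemma mem_posRoots_or_neg {β : Q} (hβ : β ∈ finRoots) : β ∈ posRoots ∨ -β ∈ posRoots := by
  rcases List.mem_append.mp hβ with h | h
  · exact Or.inl h
  · obtain ⟨γ, hγ, rfl⟩ := List.mem_map.mp h
    exact Or.inr (by simpa using hγ)

lemma mem_posRoots_of_nonneg {β : Q} (hβ : β ∈ finRoots) (hnn : ∀ i, 0 ≤ β i) :
    β ∈ posRoots := by
  refine (mem_posRoots_or_neg hβ).resolve_right fun hneg => ?_
  obtain ⟨-, hB, hnn', -⟩ := posRoots_spec _ hneg
  have : -β = 0 := le_antisymm (fun i => by simpa using hnn i) hnn'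
  rw [this] at hB
  simp [B] at hB

lemma finPart_mem_finRoots {v : Q} (hv : v ∈ ΔrePos) : finPart v ∈ finRoots :=
  mem_finRoots (finPart_apply_zero v) ((B_finPart v).trans hv.2)

lemma mem_posRoots_of_mem_Δ0'Pos {γ : Q} (hγ : γ ∈ Δ0'Pos) : γ ∈ posRoots :=
  mem_posRoots_of_nonneg (mem_finRoots hγ.1.2.1 hγ.1.1) hγ.2

lemma δ_nonneg : ∀ i, 0 ≤ δ i := by decide

lemma add_smul_δ_mem_ΔrePos {β : Q} (hβ : β ∈ posRoots) {c : ℤ} (hc : 0 ≤ c) :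
    β + c • δ ∈ ΔrePos := by
  obtain ⟨-, hB, hnn, -⟩ := posRoots_spec β hβ
  exact ⟨fun i => add_nonneg (hnn i) (mul_nonneg hc (δ_nonneg i)), by rw [B_add_smul_δ, hB]⟩

lemma smul_δ_sub_mem_ΔrePos {β : Q} (hβ : β ∈ posRoots) {c : ℤ} (hc : 1 ≤ c) :
    c • δ - β ∈ ΔrePos := by
  obtain ⟨-, hB, -, hle⟩ := posRoots_spec β hβ
  refine ⟨fun i => ?_, by rw [B_smul_δ_sub, hB]⟩
  have := hle i
  have := δ_nonneg i
  simp only [Pi.sub_apply, Pi.smul_apply, smul_eq_mul]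
  nlinarith

/-- The positive long roots of the folded system `G₂`, realised as `σ`-orbit sums. -/
def longRoots : List Q :=
  [![0, 0, 1, 0, 1, 0, 1], ![0, 0, 1, 3, 1, 0, 1], ![0, 0, 2, 3, 2, 0, 2]]

lemma one_le_apply_two_of_mem_longRoots : ∀ x ∈ longRoots, 1 ≤ x 2 := by decide

lemma exists_σsum_eq_of_mem_longRoots : ∀ x ∈ longRoots,
    ∃ γ ∈ posRoots, γ 1 = 0 ∧ γ 5 = 0 ∧ σmap γ ≠ γ ∧ σsum γ = x := by
  decide

lemma σsum_mem_longRoots : ∀ γ ∈ posRoots, γ 1 = 0 → γ 5 = 0 → σmap γ ≠ γ →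
    σsum γ ∈ longRoots := by
  decide

set_option maxHeartbeats 1000000 in
lemma exists_σsum_eq_add_smul_δ : ∀ x ∈ longRoots, ∀ r ∈ ([0, 1, 2] : List ℤ),
    ∃ w ∈ posRoots, σmap w ≠ w ∧ σsum w = x + r • δ := by
  decide

set_option maxHeartbeats 1000000 in
lemma finPart_σsum_mem_longRoots : ∀ β ∈ finRoots, σmap β ≠ β →
    finPart (σsum β) = 0 ∨ finPart (σsum β) ∈ longRoots ∨ -finPart (σsum β) ∈ longRoots := by
  decide

set_option maxRecDepth 40000 in
set_option maxHeartbeats 4000000 in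
lemma eq_finPart_σmap_iterate : ∀ β ∈ finRoots, ∀ γ ∈ finRoots, finPart (σsum β) ≠ 0 →
    finPart (σsum β) = finPart (σsum γ) → (σsum β 0 - σsum γ 0) % 3 = 0 →
    ∃ j : Fin 3, γ = finPart (σmap^[j] β) := by
  decide

/-! ### The folded root system -/

lemma apply_zero_of_mem_ulΔ0Pos {x : Q} (hx : x ∈ ulΔ0Pos) : x 0 = 0 := by
  obtain ⟨γ, ⟨⟨-, h0, h1, h5⟩, -⟩, rfl⟩ := hx
  unfold O
  split_ifs
  · exact h0
  · simp [σmap, h0, h1, h5]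

lemma ne_zero_of_mem_ulΔ0Pos {x : Q} (hx : x ∈ ulΔ0Pos) : x ≠ 0 := by
  obtain ⟨γ, hγ, rfl⟩ := hx
  exact O_ne_zero ⟨hγ.2, hγ.1.1⟩

lemma mem_ulΔ0Pos_of_fixed {β : Q} (hβ : β ∈ posRoots) (hfix : σmap β = β) :
    β ∈ ulΔ0Pos := by
  obtain ⟨h0, hB, hnn, -⟩ := posRoots_spec β hβ
  have h1 : β 1 = 0 := (congrFun hfix 0 : β 1 = β 0).trans h0
  have h5 : β 5 = 0 := (congrFun hfix 1 : β 5 = β 1).trans h1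
  exact ⟨β, ⟨⟨hB, h0, h1, h5⟩, hnn⟩, O_of_fixed hfix⟩

lemma mem_ulΔ0Pos_of_mem_longRoots {x : Q} (hx : x ∈ longRoots) : x ∈ ulΔ0Pos := by
  obtain ⟨γ, hγ, h1, h5, hfix, rfl⟩ := exists_σsum_eq_of_mem_longRoots x hx
  obtain ⟨h0, hB, hnn, -⟩ := posRoots_spec γ hγ
  exact ⟨γ, ⟨⟨hB, h0, h1, h5⟩, hnn⟩, O_of_not_fixed hfix⟩

lemma add_smul_δ_mem_ulΔrePos {x : Q} (hx : x ∈ ulΔ0Pos) {m : ℤ} (hm : 0 ≤ m) :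
    x + m • δ ∈ ulΔrePos := by
  lift m to ℕ using hm
  exact Or.inl ⟨x, hx, m, rfl⟩

lemma smul_δ_sub_mem_ulΔrePos {x : Q} (hx : x ∈ ulΔ0Pos) {m : ℤ} (hm : 1 ≤ m) :
    m • δ - x ∈ ulΔrePos := by
  lift m to ℕ using by omega
  exact Or.inr ⟨x, hx, m, by exact_mod_cast hm, rfl⟩

lemma finPart_ne_zero_of_mem_ulΔrePos {y : Q} (hy : y ∈ ulΔrePos) : finPart y ≠ 0 := by
  rcases hy with ⟨x, hx, m, rfl⟩ | ⟨x, hx, m, -, rfl⟩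
  · rw [finPart_add_smul_δ, finPart_of_apply_zero (apply_zero_of_mem_ulΔ0Pos hx)]
    exact ne_zero_of_mem_ulΔ0Pos hx
  · rw [sub_eq_neg_add, finPart_add_smul_δ,
      finPart_of_apply_zero (by simp [apply_zero_of_mem_ulΔ0Pos hx]), neg_ne_zero]
    exact ne_zero_of_mem_ulΔ0Pos hx

lemma O_mem_ulΔrePos_of_fixed {v : Q} (hv : v ∈ ΔrePos) (hfix : σmap v = v) :
    O v ∈ ulΔrePos := by
  have hβfix : σmap (finPart v) = finPart v := σmap_finPart_eq_iff.2 hfix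
  rw [O_of_fixed hfix, ← finPart_add_smul_δ_self v]
  rcases mem_posRoots_or_neg (finPart_mem_finRoots hv) with hpos | hneg
  · exact add_smul_δ_mem_ulΔrePos (mem_ulΔ0Pos_of_fixed hpos hβfix) (hv.1 0)
  · have hv0 : 1 ≤ v 0 := by
      by_contra! h
      have hnn := (posRoots_spec _ hneg).2.2.1
      rw [finPart_of_apply_zero (by linarith [hv.1 0])] at hnn
      exact ne_zero_of_mem_ΔrePos hv (le_antisymm (fun i => by simpa using hnn i) hv.1)
    rw [show finPart v + v 0 • δ = v 0 • δ - -finPart v by abel]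
    exact smul_δ_sub_mem_ulΔrePos (mem_ulΔ0Pos_of_fixed hneg (by rw [σmap_neg, hβfix])) hv0

lemma O_mem_of_not_fixed {v : Q} (hv : v ∈ ΔrePos) (hfix : σmap v ≠ v) :
    (∃ m : ℤ, 0 < m ∧ O v = m • δ) ∨ O v ∈ ulΔrePos := by
  have hOv : O v = finPart (O v) + O v 0 • δ := (finPart_add_smul_δ_self _).symm
  have hk : 0 ≤ O v 0 := le_trans (hv.1 0) (le_O hv.1 0)
  have ht : finPart (O v) = finPart (σsum (finPart v)) := by
    rw [finPart_σsum_finPart, O_of_not_fixed hfix]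
  have hclass := finPart_σsum_mem_longRoots _ (finPart_mem_finRoots hv)
    (mt σmap_finPart_eq_iff.1 hfix)
  rw [← ht] at hclass
  rcases hclass with h0 | hl | hl
  · left
    rw [h0, zero_add] at hOv
    refine ⟨O v 0, lt_of_le_of_ne hk fun h => O_ne_zero hv ?_, hOv⟩
    rw [hOv, ← h, zero_smul]
  · exact Or.inr (hOv ▸ add_smul_δ_mem_ulΔrePos (mem_ulΔ0Pos_of_mem_longRoots hl) hk)
  · right
    have h2 : 0 ≤ O v 2 := le_trans (hv.1 2) (le_O hv.1 2)
    have hx2 := one_le_apply_two_of_mem_longRoots _ hl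
    rw [hOv] at h2 ⊢
    rw [← neg_neg (finPart (O v)), neg_add_eq_sub]
    refine smul_δ_sub_mem_ulΔrePos (mem_ulΔ0Pos_of_mem_longRoots hl) ?_
    simp only [Pi.add_apply, Pi.neg_apply, Pi.smul_apply, smul_eq_mul, δ,
      Matrix.cons_val] at h2 hx2
    omega

theorem O_mem {v : Q} (hv : v ∈ ΔrePos) :
    (∃ m : ℤ, 0 < m ∧ O v = m • δ) ∨ O v ∈ ulΔrePos := by
  by_cases hfix : σmap v = v
  · exact Or.inr (O_mem_ulΔrePos_of_fixed hv hfix)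
  · exact O_mem_of_not_fixed hv hfix

lemma σmap_eq_self_iff_B_O {v : Q} (hv : v ∈ ΔrePos) : σmap v = v ↔ B (O v) (O v) = 2 := by
  refine ⟨fun h => by rw [O_of_fixed h]; exact hv.2, fun hB => by_contra fun h => ?_⟩
  rw [O_of_not_fixed h, B_σsum, hv.2] at hB
  omega

lemma eq_of_finPart_eq {u w : Q} (hu : σmap u ≠ u) (hw : σmap w ≠ w)
    (hf : finPart u = finPart w) (hO : O u = O w) : u = w := by
  have h0 := congrFun hO 0
  have h1 := congrFun hf 1
  have h5 := congrFun hf 5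
  rw [O_of_not_fixed hu, O_of_not_fixed hw, σsum_apply_zero, σsum_apply_zero] at h0
  simp only [finPart, Pi.sub_apply, Pi.smul_apply, smul_eq_mul, δ, Matrix.cons_val] at h1 h5
  have hu0 : u 0 = w 0 := by omega
  rw [← finPart_add_smul_δ_self u, ← finPart_add_smul_δ_self w, hf, hu0]

lemma mem_orb_of_O_eq {v w : Q} (hv : v ∈ ΔrePos) (hw : w ∈ ΔrePos)
    (hδ : ¬ ∃ m : ℤ, O v = m • δ) (h : O v = O w) : w ∈ orb v := by
  have hfix_iff : σmap v = v ↔ σmap w = w := by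
    rw [σmap_eq_self_iff_B_O hv, σmap_eq_self_iff_B_O hw, h]
  by_cases hv' : σmap v = v
  · rw [O_of_fixed hv', O_of_fixed (hfix_iff.1 hv')] at h
    exact ⟨0, h.symm⟩
  have hw' : σmap w ≠ w := mt hfix_iff.2 hv'
  rw [O_of_not_fixed hv', ← finPart_eq_zero_iff] at hδ
  rw [O_of_not_fixed hv', O_of_not_fixed hw'] at h
  have hne : finPart (σsum (finPart v)) ≠ 0 := by rwa [finPart_σsum_finPart]
  have hsum : finPart (σsum (finPart v)) = finPart (σsum (finPart w)) := by
    rw [finPart_σsum_finPart, finPart_σsum_finPart, h]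
  have hres : (σsum (finPart v) 0 - σsum (finPart w) 0) % 3 = 0 := by
    rw [σsum_finPart_apply_zero, σsum_finPart_apply_zero, h]
    omega
  obtain ⟨j, hj⟩ := eq_finPart_σmap_iterate _ (finPart_mem_finRoots hv) _
    (finPart_mem_finRoots hw) hne hsum hres
  rw [finPart_σmap_iterate_finPart] at hj
  refine ⟨j, (eq_of_finPart_eq (σmap_iterate_ne hv' j) hw' hj.symm ?_).symm⟩
  rw [O_σmap_iterate, O_of_not_fixed hv', O_of_not_fixed hw', h]

lemma exists_σsum_eq {x : Q} (hx : x ∈ longRoots) (n : ℤ) :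
    ∃ w ∈ posRoots, σmap w ≠ w ∧ σsum w = x + (n % 3) • δ :=
  exists_σsum_eq_add_smul_δ x hx _ <| by
    simp only [List.mem_cons, List.not_mem_nil, or_false]
    omega

lemma exists_O_eq_add_smul_δ {x : Q} (hx : x ∈ ulΔ0Pos) {m : ℤ} (hm : 0 ≤ m) :
    ∃ v ∈ ΔrePos, O v = x + m • δ := by
  obtain ⟨γ, hγ, rfl⟩ := hx
  have hγ' := mem_posRoots_of_mem_Δ0'Pos hγ
  by_cases hfix : σmap γ = γ
  · refine ⟨γ + m • δ, add_smul_δ_mem_ΔrePos hγ' hm, ?_⟩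
    rw [O_of_fixed hfix, O_of_fixed (σmap_add_smul_δ_eq_iff.2 hfix)]
  obtain ⟨w, hw, hwfix, hsum⟩ :=
    exists_σsum_eq (σsum_mem_longRoots γ hγ' hγ.1.2.2.1 hγ.1.2.2.2 hfix) m
  refine ⟨w + (m / 3) • δ, add_smul_δ_mem_ΔrePos hw (by omega), ?_⟩
  rw [O_of_not_fixed (mt σmap_add_smul_δ_eq_iff.1 hwfix), σsum_add_smul_δ, hsum,
    O_of_not_fixed hfix, add_assoc, ← add_smul, Int.emod_add_mul_ediv]

lemma exists_O_eq_smul_δ_sub {x : Q} (hx : x ∈ ulΔ0Pos) {m : ℤ} (hm : 1 ≤ m) :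
    ∃ v ∈ ΔrePos, O v = m • δ - x := by
  obtain ⟨γ, hγ, rfl⟩ := hx
  have hγ' := mem_posRoots_of_mem_Δ0'Pos hγ
  by_cases hfix : σmap γ = γ
  · refine ⟨m • δ - γ, smul_δ_sub_mem_ΔrePos hγ' hm, ?_⟩
    rw [O_of_fixed hfix, O_of_fixed (σmap_smul_δ_sub_eq_iff.2 hfix)]
  obtain ⟨w, hw, hwfix, hsum⟩ :=
    exists_σsum_eq (σsum_mem_longRoots γ hγ' hγ.1.2.2.1 hγ.1.2.2.2 hfix) (-m)
  -- `v = ⌈m / 3⌉ δ - w`, where `σsum w = x + (3 ⌈m / 3⌉ - m) δ`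
  refine ⟨(-(-m / 3)) • δ - w, smul_δ_sub_mem_ΔrePos hw (by omega), ?_⟩
  rw [O_of_not_fixed (mt σmap_smul_δ_sub_eq_iff.1 hwfix), σsum_smul_δ_sub, hsum,
    O_of_not_fixed hfix]
  conv_rhs => rw [show m = 3 * -(-m / 3) - -m % 3 by omega]
  module

lemma exists_O_eq {y : Q} (hy : y ∈ ulΔrePos) : ∃ v ∈ ΔrePos, O v = y := by
  rcases hy with ⟨x, hx, m, rfl⟩ | ⟨x, hx, m, hm, rfl⟩
  · exact exists_O_eq_add_smul_δ hx (Int.natCast_nonneg m)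
  · exact exists_O_eq_smul_δ_sub hx (by exact_mod_cast hm)

theorem statement12 :
    (∀ v ∈ ΔrePos, (∃ m : ℤ, 0 < m ∧ O v = m • δ) ∨ O v ∈ ulΔrePos) ∧
    Set.BijOn (fun ω => ∑ᶠ u ∈ ω, u)
      {ω ∈ Orbits | ¬ ∃ m : ℤ, (∑ᶠ u ∈ ω, u) = m • δ}
      ulΔrePos := by
  refine ⟨fun v hv => O_mem hv, ?_, ?_, ?_⟩
  · rintro _ ⟨⟨v, hv, rfl⟩, hδ⟩
    simp only [finsum_mem_orb] at hδ ⊢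
    exact (O_mem hv).resolve_left fun ⟨m, _, hm⟩ => hδ ⟨m, hm⟩
  · rintro _ ⟨⟨v, hv, rfl⟩, hδ⟩ _ ⟨⟨w, hw, rfl⟩, -⟩ h
    simp only [finsum_mem_orb] at hδ h
    exact (orb_eq_of_mem (mem_orb_of_O_eq hv hw hδ h)).symm
  · intro y hy
    obtain ⟨v, hv, rfl⟩ := exists_O_eq hy
    refine ⟨orb v, ⟨⟨v, hv, rfl⟩, ?_⟩, finsum_mem_orb v⟩
    rw [finsum_mem_orb, ← finPart_eq_zero_iff]
    exact finPart_ne_zero_of_mem_ulΔrePos hy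

end Stmt12
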